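/- arXiv:2506.17270 — 5 statements merged into one kernel-verified Lean document; each statement's English description precedes it below -/
import Mathlib

section
/- Let A ∈ R^{c×e} be a matrix of full row rank c (with c ≤ e), let D: R^e → R^e be a continuous strictly monotone map of the form D(q)_i = r_i · q_i · |q_i|^{x−1} with r_i > 0 and x > 1, and let b ∈ R^e, d ∈ R^c be given. Then there exists exactly one pair (h, q) ∈ R^c × R^e satisfying Aᵀ h = D(q) + b and A q = d. -/
/-!
The flows `q` with `A q = d` form a closed affine fibre on which the separable energy
`Φ q = ∑ i, (r i / (x + 1) * |q i| ^ (x + 1) + b i * q i)` is continuous and coercive, so it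
attains a minimum. At the minimiser the gradient `D q + b` of `Φ` is orthogonal to `ker A`, hence
lies in the range of `Aᵀ`, which produces the heads `h`. For two solutions, `D q' - D q` lies
in the range of `Aᵀ` while `q' - q` lies in `ker A`, so `(D q' - D q) ⬝ᵥ (q' - q) = 0`, and
strict monotonicity of `D` forces `q' = q`; then `h' = h` because `Aᵀ` is injective when `A`
is surjective.
-/

open Matrix Filter

namespace Matrix

variable {m n K : Type*} [Fintype m] [Fintype n]

theorem transpose_mulVec_injective_of_surjective [CommSemiring K] {A : Matrix m n K}
    (hA : Function.Surjective A.mulVec) : Function.Injective Aᵀ.mulVec := by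
  intro h₁ h₂ h
  refine dotProduct_eq _ _ fun u => ?_
  obtain ⟨v, rfl⟩ := hA u
  rw [dotProduct_mulVec, dotProduct_mulVec, ← mulVec_transpose, ← mulVec_transpose, h]

theorem mulVec_surjective_of_rank_eq [Field K] {A : Matrix m n K}
    (hA : A.rank = Fintype.card m) : Function.Surjective A.mulVec := by
  have : LinearMap.range A.mulVecLin = ⊤ :=
    Submodule.eq_top_of_finrank_eq (hA.trans (Module.finrank_fintype_fun_eq_card K).symm)
  exact LinearMap.range_eq_top.mp this

theorem exists_transpose_mulVec_eq_of_dotProduct_eq_zero [Field K] [DecidableEq m]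
    [DecidableEq n] {A : Matrix m n K} {w : n → K}
    (hw : ∀ v, A *ᵥ v = 0 → w ⬝ᵥ v = 0) : ∃ h, Aᵀ *ᵥ h = w := by
  have hmem : dotProductEquiv K n w ∈ (LinearMap.ker A.mulVecLin).dualAnnihilator :=
    (Submodule.mem_dualAnnihilator _).mpr fun v hv => hw v hv
  rw [← LinearMap.range_dualMap_eq_dualAnnihilator_ker] at hmem
  obtain ⟨μ, hμ⟩ := hmem
  obtain ⟨h, rfl⟩ := (dotProductEquiv K m).surjective μ
  refine ⟨h, dotProduct_eq _ _ fun v => ?_⟩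
  rw [mulVec_transpose, ← dotProduct_mulVec]
  exact LinearMap.congr_fun hμ v

end Matrix

theorem strictMono_mul_abs_rpow_sub_one {x : ℝ} (hx : 0 < x) :
    StrictMono fun t : ℝ => t * |t| ^ (x - 1) := by
  refine strictMono_of_odd_strictMonoOn_nonneg (fun t => by simp only [abs_neg, neg_mul]) ?_
  refine (Real.strictMonoOn_rpow_Ici_of_exponent_pos hx).congr fun t (ht : 0 ≤ t) => ?_
  rcases ht.eq_or_lt with rfl | ht
  · simp [Real.zero_rpow hx.ne']
  · rw [abs_of_pos ht, Real.rpow_sub ht, Real.rpow_one]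
    field_simp

theorem hasDerivAt_div_mul_abs_rpow_add_mul {x : ℝ} (hx : 0 < x) (a b t : ℝ) :
    HasDerivAt (fun t : ℝ => a / (x + 1) * |t| ^ (x + 1) + b * t)
      (a * t * |t| ^ (x - 1) + b) t := by
  have := ((hasDerivAt_abs_rpow t (by linarith : 1 < x + 1)).const_mul (a / (x + 1))).add
    ((hasDerivAt_id t).const_mul b)
  refine this.congr_deriv ?_
  rw [show x + 1 - 2 = x - 1 by ring]
  field_simp

theorem tendsto_mul_abs_rpow_add_mul_cocompact {a p : ℝ} (ha : 0 < a) (hp : 1 < p) (b : ℝ) :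
    Tendsto (fun t : ℝ => a * |t| ^ p + b * t) (cocompact ℝ) atTop := by
  have hgrowth : Tendsto (fun s : ℝ => s * (a * s ^ (p - 1) - |b|)) atTop atTop :=
    tendsto_id.atTop_mul_atTop₀ <| tendsto_atTop_add_const_right _ _ <|
      (tendsto_rpow_atTop (by linarith)).const_mul_atTop ha
  refine tendsto_atTop_mono' _ ?_ (hgrowth.comp tendsto_norm_cocompact_atTop)
  filter_upwards [tendsto_norm_cocompact_atTop.eventually_gt_atTop 0] with t ht
  rw [Real.norm_eq_abs] at ht
  have hpow : |t| ^ p = |t| * |t| ^ (p - 1) := by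
    rw [Real.rpow_sub ht, Real.rpow_one]; field_simp
  have hbt : -(|b| * |t|) ≤ b * t := by rw [← abs_mul]; exact neg_abs_le _
  simp only [Function.comp_apply, Real.norm_eq_abs, hpow]
  nlinarith

section SeparableSums

variable {ι : Type*} [Fintype ι]

theorem tendsto_sum_apply_cocompact_atTop {X : ι → Type*}
    [∀ i, TopologicalSpace (X i)] [∀ i, Nonempty (X i)] {φ : ∀ i, X i → ℝ}
    (hc : ∀ i, Continuous (φ i)) (ht : ∀ i, Tendsto (φ i) (cocompact (X i)) atTop) :
    Tendsto (fun q : ∀ i, X i => ∑ i, φ i (q i)) (cocompact (∀ i, X i)) atTop := by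
  choose m hm using fun i => (hc i).exists_forall_le (ht i)
  rw [← coprodᵢ_cocompact, Filter.coprodᵢ, tendsto_iSup]
  intro i
  refine tendsto_atTop_mono (fun q => ?_) <|
    tendsto_atTop_add_const_right _ (∑ j, φ j (m j) - φ i (m i)) ((ht i).comp tendsto_comap)
  have := Finset.single_le_sum (fun j _ => sub_nonneg.mpr (hm j (q j))) (Finset.mem_univ i)
  rw [Finset.sum_sub_distrib] at this
  simp only [Function.comp_apply]
  linarith

theorem dotProduct_eq_zero_of_forall_sum_le {φ : ι → ℝ → ℝ} {φ' q v : ι → ℝ}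
    (hφ : ∀ i, HasDerivAt (φ i) (φ' i) (q i))
    (hmin : ∀ t : ℝ, ∑ i, φ i (q i) ≤ ∑ i, φ i (q i + t * v i)) :
    φ' ⬝ᵥ v = 0 := by
  have hloc : IsLocalMin (fun t : ℝ => ∑ i, φ i (q i + t * v i)) 0 :=
    Eventually.of_forall fun t => by simpa using hmin t
  refine hloc.hasDerivAt_eq_zero (HasDerivAt.fun_sum fun i _ => ?_)
  have hline : HasDerivAt (fun t : ℝ => q i + t * v i) (v i) 0 := by
    simpa using (hasDerivAt_mul_const (v i)).const_add (q i)
  exact (by simpa using hφ i : HasDerivAt (φ i) (φ' i) (q i + 0 * v i)).comp 0 hline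

theorem StrictMono.sub_mul_sub_pos {f : ℝ → ℝ} (hf : StrictMono f) {a c : ℝ} (h : a ≠ c) :
    0 < (f a - f c) * (a - c) := by
  rcases h.lt_or_gt with h | h
  · exact mul_pos_of_neg_of_neg (sub_neg.mpr (hf h)) (sub_neg.mpr h)
  · exact mul_pos (sub_pos.mpr (hf h)) (sub_pos.mpr h)

theorem eq_of_dotProduct_sub_eq_zero {f : ι → ℝ → ℝ}
    (hf : ∀ i, StrictMono (f i)) {a c : ι → ℝ}
    (h : (fun i => f i (a i) - f i (c i)) ⬝ᵥ (a - c) = 0) : a = c := by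
  have hnonneg : ∀ i ∈ Finset.univ, 0 ≤ (f i (a i) - f i (c i)) * (a i - c i) := fun i _ => by
    rcases eq_or_ne (a i) (c i) with hi | hi
    · simp [hi]
    · exact ((hf i).sub_mul_sub_pos hi).le
  have hzero := (Finset.sum_eq_zero_iff_of_nonneg hnonneg).mp h
  funext i
  by_contra hi
  exact ((hf i).sub_mul_sub_pos hi).ne' (hzero i (Finset.mem_univ i))

end SeparableSums

section SeparablePotential

variable {m n : Type*} [Fintype m] [Fintype n] [DecidableEq m] [DecidableEq n]
  {A : Matrix m n ℝ} {φ g : n → ℝ → ℝ}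

theorem exists_transpose_mulVec_eq_and_mulVec_eq (hA : Function.Surjective A.mulVec)
    (hφ : ∀ i t, HasDerivAt (φ i) (g i t) t)
    (hcoer : ∀ i, Tendsto (φ i) (cocompact ℝ) atTop) (d : m → ℝ) :
    ∃ h q, Aᵀ *ᵥ h = (fun i => g i (q i)) ∧ A *ᵥ q = d := by
  obtain ⟨q₀, hq₀⟩ := hA d
  have hφc : ∀ i, Continuous (φ i) := fun i =>
    continuous_iff_continuousAt.mpr fun t => (hφ i t).continuousAt
  have hΦ : Continuous fun q : n → ℝ => ∑ i, φ i (q i) :=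
    continuous_finsetSum _ fun i _ => (hφc i).comp (continuous_apply i)
  have hfiber : IsClosed {q | A *ᵥ q = d} :=
    isClosed_eq A.mulVecLin.continuous_of_finiteDimensional continuous_const
  obtain ⟨q, hq, hmin⟩ := hΦ.continuousOn.exists_isMinOn' hfiber hq₀ <|
    ((tendsto_sum_apply_cocompact_atTop hφc hcoer).eventually_ge_atTop _).filter_mono inf_le_left
  have hcrit : ∀ v, A *ᵥ v = 0 → (fun i => g i (q i)) ⬝ᵥ v = 0 := fun v hv =>
    dotProduct_eq_zero_of_forall_sum_le (fun i => hφ i (q i)) fun t => hmin <|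
      show A *ᵥ (q + t • v) = d by rw [mulVec_add, mulVec_smul, hv, hq, smul_zero, add_zero]
  obtain ⟨h, hh⟩ := exists_transpose_mulVec_eq_of_dotProduct_eq_zero hcrit
  exact ⟨h, q, hh, hq⟩

theorem existsUnique_transpose_mulVec_eq_and_mulVec_eq (hA : Function.Surjective A.mulVec)
    (hφ : ∀ i t, HasDerivAt (φ i) (g i t) t) (hg : ∀ i, StrictMono (g i))
    (hcoer : ∀ i, Tendsto (φ i) (cocompact ℝ) atTop) (d : m → ℝ) :
    ∃! p : (m → ℝ) × (n → ℝ),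
      Aᵀ *ᵥ p.1 = (fun i => g i (p.2 i)) ∧ A *ᵥ p.2 = d := by
  obtain ⟨h, q, hh, hq⟩ := exists_transpose_mulVec_eq_and_mulVec_eq hA hφ hcoer d
  refine ⟨(h, q), ⟨hh, hq⟩, ?_⟩
  rintro ⟨h', q'⟩ ⟨hh', hq'⟩
  dsimp only at hh' hq'
  have hqq' : q' = q := eq_of_dotProduct_sub_eq_zero hg <|
    calc (fun i => g i (q' i) - g i (q i)) ⬝ᵥ (q' - q)
        = (Aᵀ *ᵥ (h' - h)) ⬝ᵥ (q' - q) := by rw [mulVec_sub, hh', hh]; rfl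
      _ = (h' - h) ⬝ᵥ (A *ᵥ (q' - q)) := by rw [mulVec_transpose, dotProduct_mulVec]
      _ = 0 := by rw [mulVec_sub, hq', hq, sub_self, dotProduct_zero]
  subst hqq'
  rw [transpose_mulVec_injective_of_surjective hA (hh'.trans hh.symm)]

end SeparablePotential

theorem unique_hydraulic_state_abstract_general
    (c e : ℕ) (A : Matrix (Fin c) (Fin e) ℝ) (hA : A.rank = c)
    (r : Fin e → ℝ) (hr : ∀ i, 0 < r i) (x : ℝ) (hx : 1 < x)
    (D : (Fin e → ℝ) → (Fin e → ℝ))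
    (hD : ∀ q i, D q i = r i * q i * |q i| ^ (x - 1))
    (b : Fin e → ℝ) (d : Fin c → ℝ) :
    ∃! p : (Fin c → ℝ) × (Fin e → ℝ),
      Aᵀ.mulVec p.1 = D p.2 + b ∧ A.mulVec p.2 = d := by
  have hx₀ : 0 < x := by linarith
  have hDb : ∀ q, D q + b = fun i => r i * q i * |q i| ^ (x - 1) + b i :=
    fun q => funext fun i => by rw [Pi.add_apply, hD]
  simp only [hDb]
  refine existsUnique_transpose_mulVec_eq_and_mulVec_eq
    (mulVec_surjective_of_rank_eq (by rwa [Fintype.card_fin]))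
    (fun i t => hasDerivAt_div_mul_abs_rpow_add_mul hx₀ (r i) (b i) t)
    (fun i => ?_) (fun i => tendsto_mul_abs_rpow_add_mul_cocompact
      (div_pos (hr i) (by linarith)) (by linarith) (b i)) d
  simpa only [mul_assoc] using
    ((strictMono_mul_abs_rpow_sub_one hx₀).const_mul (hr i)).add_const (b i)

/-- If `A ∈ ℝ^{c×e}` has full row rank `c ≤ e` and `D` is the
Hazen-Williams nonlinearity `D(q)_i = r_i q_i |q_i|^(x-1)` (`r_i > 0`, `x > 1`), then for
any `b ∈ ℝ^e`, `d ∈ ℝ^c` there is exactly one pair `(h, q)` with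
`Aᵀ h = D(q) + b` and `A q = d`. -/
theorem unique_hydraulic_state_abstract
    (c e : ℕ) (hce : c ≤ e) (A : Matrix (Fin c) (Fin e) ℝ) (hA : A.rank = c)
    (r : Fin e → ℝ) (hr : ∀ i, 0 < r i) (x : ℝ) (hx : 1 < x)
    (D : (Fin e → ℝ) → (Fin e → ℝ))
    (hD : ∀ q i, D q i = r i * q i * |q i| ^ (x - 1))
    (b : Fin e → ℝ) (d : Fin c → ℝ) :
    ∃! p : (Fin c → ℝ) × (Fin e → ℝ),
      Aᵀ.mulVec p.1 = D p.2 + b ∧ A.mulVec p.2 = d :=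
  unique_hydraulic_state_abstract_general c e A hA r hr x hx D hD b d
end

section
/- Let f: R^e → R^e have components f_i(q) = r_i q_i |q_i|^{x−1} with r_i > 0 and x > 1, let K ⊂ R^e be a linear subspace, Π the orthogonal projection onto K, and fix q_d ∈ R^e, b ∈ R^e. Then the map Ψ: K → K, Ψ(q₀) = Π(f(q_d + q₀) − b), is coercive on K: ⟨Ψ(q₀), q₀⟩ / ‖q₀‖ → ∞ as ‖q₀‖ → ∞ with q₀ ∈ K. -/
/-!
Since `Π` is self-adjoint and fixes `q₀ ∈ K`, `⟪Ψ q₀, q₀⟫ = ⟪f (q_d + q₀), q₀⟫ - ⟪b, q₀⟫`.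
Coordinatewise, `(t + a) |t + a|^(x-1) a ≥ |a|^(x+1) / 2^x - C(t)`: for `|a| ≥ 2|t|` the factor
`t + a` is comparable to `a`, and on the compact range `|a| ≤ 2|t|` both sides are bounded.
Summing and comparing `∑ |a_i|^(x+1)` with `‖a‖^(x+1)` gives
`⟪Ψ q₀, q₀⟫ ≥ c ‖q₀‖^(x+1) - ‖b‖ ‖q₀‖ - C` with `c > 0`, which is superlinear because `x > 0`.
-/

open Filter Real

theorem abs_rpow_div_two_rpow_le_mul_of_two_mul_abs_le {x t a : ℝ} (hx : 1 ≤ x)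
    (ha : 2 * |t| ≤ |a|) :
    |a| ^ (x + 1) / 2 ^ x ≤ (t + a) * |t + a| ^ (x - 1) * a := by
  have half_le : |a| / 2 ≤ |t + a| := by
    have := abs_add_le (t + a) (-t)
    rw [add_neg_cancel_comm, abs_neg] at this
    linarith
  have sq_half_le : a ^ 2 / 2 ≤ (t + a) * a := by
    have := neg_abs_le (t * a)
    rw [abs_mul] at this
    nlinarith [sq_abs a, abs_nonneg t]
  have split : |a| ^ (x + 1) / 2 ^ x = (|a| / 2) ^ (x - 1) * (a ^ 2 / 2) := by
    rw [div_rpow (abs_nonneg a) zero_le_two, ← sq_abs a,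
      show x + 1 = (x - 1) + 2 by ring, show x = (x - 1) + 1 by ring,
      rpow_add' (abs_nonneg a) (by linarith), rpow_add_one two_ne_zero]
    norm_cast
    ring_nf
  calc |a| ^ (x + 1) / 2 ^ x = (|a| / 2) ^ (x - 1) * (a ^ 2 / 2) := split
    _ ≤ |t + a| ^ (x - 1) * ((t + a) * a) := by gcongr
    _ = (t + a) * |t + a| ^ (x - 1) * a := by ring

theorem exists_abs_rpow_div_two_rpow_sub_le_mul {x : ℝ} (hx : 1 ≤ x) (t : ℝ) :
    ∃ C, ∀ a, |a| ^ (x + 1) / 2 ^ x - C ≤ (t + a) * |t + a| ^ (x - 1) * a := by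
  set g : ℝ → ℝ := fun a => (t + a) * |t + a| ^ (x - 1) * a - |a| ^ (x + 1) / 2 ^ x
  have hg : Continuous g := by
    have := continuous_rpow_const (q := x - 1) (by linarith)
    have := continuous_rpow_const (q := x + 1) (by linarith)
    fun_prop
  obtain ⟨m, hm⟩ := (isCompact_Icc (a := -(2 * |t|)) (b := 2 * |t|)).bddBelow_image hg.continuousOn
  refine ⟨max (-m) 0, fun a => ?_⟩
  rcases le_total |a| (2 * |t|) with hsmall | hlarge
  · have := hm ⟨a, abs_le.mp hsmall, rfl⟩
    simp only [g] at this
    linarith [le_max_left (-m) 0]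
  · linarith [abs_rpow_div_two_rpow_le_mul_of_two_mul_abs_le hx hlarge, le_max_right (-m) 0]

theorem EuclideanSpace.norm_le_sum_abs {ι : Type*} [Fintype ι] (a : EuclideanSpace ℝ ι) :
    ‖a‖ ≤ ∑ i, |a i| := by
  rw [EuclideanSpace.norm_eq, ← sqrt_sq (Finset.sum_nonneg fun i _ => abs_nonneg (a i))]
  exact sqrt_le_sqrt (Finset.sum_sq_le_sq_sum_of_nonneg fun i _ => abs_nonneg (a i))

theorem EuclideanSpace.exists_pos_mul_norm_rpow_le_sum {ι : Type*} [Fintype ι] {w : ι → ℝ}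
    (hw : ∀ i, 0 < w i) {p : ℝ} (hp : 1 ≤ p) :
    ∃ c > 0, ∀ a : EuclideanSpace ℝ ι, c * ‖a‖ ^ p ≤ ∑ i, w i * |a i| ^ p := by
  rcases isEmpty_or_nonempty ι with _ | _
  · refine ⟨1, one_pos, fun a => ?_⟩
    simp [Subsingleton.elim a 0, zero_rpow (by linarith : p ≠ 0)]
  obtain ⟨i₀, hi₀⟩ := Finite.exists_min w
  have hcard : (0 : ℝ) < Fintype.card ι := by exact_mod_cast Fintype.card_pos
  refine ⟨w i₀ / (Fintype.card ι : ℝ) ^ (p - 1), div_pos (hw i₀) (rpow_pos_of_pos hcard _),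
    fun a => ?_⟩
  have power_mean : ‖a‖ ^ p ≤ (Fintype.card ι : ℝ) ^ (p - 1) * ∑ i, |a i| ^ p :=
    (rpow_le_rpow (norm_nonneg a) a.norm_le_sum_abs (by linarith)).trans
      (rpow_sum_le_const_mul_sum_rpow Finset.univ (fun i => a i) hp)
  have hcard_pow : (Fintype.card ι : ℝ) ^ (p - 1) ≠ 0 := (rpow_pos_of_pos hcard _).ne'
  calc w i₀ / (Fintype.card ι : ℝ) ^ (p - 1) * ‖a‖ ^ p
      ≤ w i₀ / (Fintype.card ι : ℝ) ^ (p - 1) * ((Fintype.card ι : ℝ) ^ (p - 1) * ∑ i, |a i| ^ p) :=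
        mul_le_mul_of_nonneg_left power_mean (div_nonneg (hw i₀).le (rpow_nonneg hcard.le _))
    _ = w i₀ * ∑ i, |a i| ^ p := by field_simp
    _ ≤ ∑ i, w i * |a i| ^ p := by
        rw [Finset.mul_sum]
        gcongr with i
        exact hi₀ i

theorem tendsto_div_atTop_of_rpow_le {α : Type*} {l : Filter α} {ν g : α → ℝ}
    (hν : Tendsto ν l atTop) {c p B C : ℝ} (hc : 0 < c) (hp : 1 < p)
    (h : ∀ a, c * ν a ^ p - B * ν a - C ≤ g a) : Tendsto (fun a => g a / ν a) l atTop := by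
  have hlow : Tendsto (fun s => c * s ^ (p - 1) - B - |C|) atTop atTop :=
    tendsto_atTop_add_const_right _ _ <| tendsto_atTop_add_const_right _ _ <|
      (tendsto_rpow_atTop (by linarith)).const_mul_atTop hc
  refine tendsto_atTop_mono' l ?_ (hlow.comp hν)
  filter_upwards [hν.eventually_ge_atTop 1] with a ha
  have hpos : 0 < ν a := by linarith
  rw [Function.comp_apply, le_div_iff₀ hpos, sub_mul, sub_mul, mul_assoc,
    ← rpow_add_one hpos.ne', sub_add_cancel]
  nlinarith [h a, le_abs_self C, abs_nonneg C]

theorem exists_pos_mul_norm_rpow_sub_le_inner_hazenWilliams {ι : Type*} [Fintype ι]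
    {r : ι → ℝ} (hr : ∀ i, 0 < r i) {x : ℝ} (hx : 1 ≤ x)
    {f : EuclideanSpace ℝ ι → EuclideanSpace ℝ ι} (hf : ∀ q i, f q i = r i * q i * |q i| ^ (x - 1))
    (qd : EuclideanSpace ℝ ι) :
    ∃ c > 0, ∃ C, ∀ a, c * ‖a‖ ^ (x + 1) - C ≤ inner ℝ (f (qd + a)) a := by
  choose C hC using fun i => exists_abs_rpow_div_two_rpow_sub_le_mul hx (qd i)
  obtain ⟨c, hc, hnorm⟩ :=
    EuclideanSpace.exists_pos_mul_norm_rpow_le_sum hr (p := x + 1) (by linarith)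
  refine ⟨c / 2 ^ x, by positivity, ∑ i, r i * C i, fun a => ?_⟩
  calc c / 2 ^ x * ‖a‖ ^ (x + 1) - ∑ i, r i * C i
      ≤ (∑ i, r i * |a i| ^ (x + 1)) / 2 ^ x - ∑ i, r i * C i := by
        rw [div_mul_eq_mul_div]
        gcongr
        exact hnorm a
    _ = ∑ i, r i * (|a i| ^ (x + 1) / 2 ^ x - C i) := by
        simp only [mul_sub, Finset.sum_sub_distrib, Finset.sum_div, mul_div_assoc]
    _ ≤ ∑ i, f (qd + a) i * a i := by
        refine Finset.sum_le_sum fun i _ => ?_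
        rw [hf, PiLp.add_apply, mul_assoc (r i), mul_assoc (r i)]
        exact mul_le_mul_of_nonneg_left (hC i (a i)) (hr i).le
    _ = inner ℝ (f (qd + a)) a := by
        simp only [PiLp.inner_apply, RCLike.inner_apply, conj_trivial, mul_comm]

/-- With `f` the Hazen-Williams nonlinearity (`r_i > 0`, `x > 1`),
`K ⊂ ℝ^e` a subspace, `Π` the orthogonal projection onto `K` and fixed `q_d, b ∈ ℝ^e`,
the map `Ψ : K → K`, `Ψ(q₀) = Π(f(q_d + q₀) − b)` is coercive on `K`:
`⟨Ψ(q₀), q₀⟩ / ‖q₀‖ → ∞` as `‖q₀‖ → ∞` in `K`. -/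
theorem projected_hazen_williams_coercive
    (e : ℕ) (r : Fin e → ℝ) (hr : ∀ i, 0 < r i) (x : ℝ) (hx : 1 < x)
    (f : EuclideanSpace ℝ (Fin e) → EuclideanSpace ℝ (Fin e))
    (hf : ∀ q i, f q i = r i * q i * |q i| ^ (x - 1))
    (K : Submodule ℝ (EuclideanSpace ℝ (Fin e)))
    (qd b : EuclideanSpace ℝ (Fin e))
    (Ψ : K → K)
    (hΨ : ∀ q₀ : K, Ψ q₀ = K.orthogonalProjection (f (qd + (q₀ : EuclideanSpace ℝ (Fin e))) - b)) :
    Tendsto (fun q₀ : K => (inner ℝ (Ψ q₀) q₀ : ℝ) / ‖q₀‖)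
      (comap (fun q₀ : K => ‖q₀‖) atTop) atTop := by
  obtain ⟨c, hc, C, hfa⟩ := exists_pos_mul_norm_rpow_sub_le_inner_hazenWilliams hr hx.le hf qd
  refine tendsto_div_atTop_of_rpow_le tendsto_comap hc (by linarith : 1 < x + 1)
    (B := ‖b‖) (C := C) fun q₀ => ?_
  rw [hΨ, Submodule.inner_orthogonalProjectionOnto_eq_of_mem_right, inner_sub_left]
  have hf_lower : c * ‖q₀‖ ^ (x + 1) - C ≤ inner ℝ (f (qd + q₀)) (q₀ : EuclideanSpace ℝ (Fin e)) :=
    hfa q₀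
  have hb_upper : inner ℝ b (q₀ : EuclideanSpace ℝ (Fin e)) ≤ ‖b‖ * ‖q₀‖ := real_inner_le_norm _ _
  linarith
end

section
/- Let A ∈ R^{c×e} have rank c, let f: R^e → R^e be strictly monotone (⟨f(q₁)−f(q₂), q₁−q₂⟩ > 0 whenever q₁ ≠ q₂), and let b ∈ R^e. If (h₁, q₁) and (h₂, q₂) in R^c × R^e both satisfy Aᵀ h = f(q) + b and A q₁ = A q₂, then q₁ = q₂ and h₁ = h₂. -/
open Matrix

/-- Uniqueness part of the hydraulic state theorem: if `A` has full row
rank `c` and `f` is strictly monotone, then two solutions `(h₁,q₁)`, `(h₂,q₂)` of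
`Aᵀ h = f(q) + b` with `A q₁ = A q₂` coincide. -/
theorem hydraulic_state_uniqueness
    (c e : ℕ) (A : Matrix (Fin c) (Fin e) ℝ) (hA : A.rank = c)
    (f : (Fin e → ℝ) → (Fin e → ℝ))
    (hmono : ∀ q₁ q₂ : Fin e → ℝ, q₁ ≠ q₂ → 0 < (f q₁ - f q₂) ⬝ᵥ (q₁ - q₂))
    (b : Fin e → ℝ) (h₁ h₂ : Fin c → ℝ) (q₁ q₂ : Fin e → ℝ)
    (he₁ : Aᵀ.mulVec h₁ = f q₁ + b) (he₂ : Aᵀ.mulVec h₂ = f q₂ + b)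
    (hm : A.mulVec q₁ = A.mulVec q₂) :
    q₁ = q₂ ∧ h₁ = h₂ := by
  have hf : f q₁ - f q₂ = Aᵀ.mulVec (h₁ - h₂) := by
    rw [Matrix.mulVec_sub, he₁, he₂]
    abel
  have hkey : (f q₁ - f q₂) ⬝ᵥ (q₁ - q₂) = 0 := by
    rw [hf, ← Matrix.vecMul_transpose, transpose_transpose,
      ← Matrix.dotProduct_mulVec, Matrix.mulVec_sub, hm, sub_self,
      dotProduct_zero]
  have hq : q₁ = q₂ := by
    by_contra hne
    exact absurd hkey (ne_of_gt (hmono _ _ hne))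
  have hAeq : Aᵀ.mulVec h₁ = Aᵀ.mulVec h₂ := by rw [he₁, he₂, hq]
  have hinj : Function.Injective A.vecMul := by
    rw [Matrix.vecMul_injective_iff]
    rw [linearIndependent_iff_card_eq_finrank_span]
    unfold Set.finrank
    rw [← A.rank_eq_finrank_span_row, hA, Fintype.card_fin]
  rw [Matrix.mulVec_transpose, Matrix.mulVec_transpose] at hAeq
  exact ⟨hq, hinj hAeq⟩
end

section
/- Let G be a finite connected graph with node partition V = V_r ⊔ V_c (both nonempty), incidence matrix B, and let E_I ⊂ E be a set of |V_c| edges whose columns in B_{V_c,·} are linearly independent (so B_{V_c,E_I} is invertible); set E_D = E \ E_I. Given reservoir heads h_{V_r} ∈ R^{|V_r|} and flows q_{E_I} ∈ R^{E_I}, there exists exactly one triple (h_{V_c}, q_{E_D}, d) such that the combined state ([h_{V_r}; h_{V_c}], [q_{E_I}; q_{E_D}], d) satisfies Bᵀh = D(q)q and B_{V_c,·}q = −2d. In particular h_{V_c} = (B_{V_c,E_I}ᵀ)^{-1}(D_{E_I,E_I} q_{E_I} − B_{V_r,E_I}ᵀ h_{V_r}). -/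
open Matrix

private lemma hw_key {x : ℝ} (hx : 0 < x) {q : ℝ} (hq : 0 ≤ q) :
    q * |q| ^ (x - 1) = q ^ x := by
  rcases eq_or_lt_of_le hq with h | h
  · simp [← h, Real.zero_rpow hx.ne']
  · rw [abs_of_pos h]
    nth_rewrite 1 [← Real.rpow_one q]
    rw [← Real.rpow_add h]
    ring_nf

private lemma hw_mono {x : ℝ} (hx : 1 < x) :
    StrictMono (fun q : ℝ => q * |q| ^ (x - 1)) := by
  have hx0 : (0:ℝ) < x := lt_trans one_pos hx
  intro a b hab
  simp only
  rcases le_or_gt 0 a with ha | ha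
  · rw [hw_key hx0 ha, hw_key hx0 (ha.trans hab.le)]
    exact Real.rpow_lt_rpow ha hab hx0
  · rcases lt_or_ge b 0 with hb | hb
    · have h1 : a * |a| ^ (x-1) = -((-a) * |(-a)| ^ (x-1)) := by rw [abs_neg]; ring
      have h2 : b * |b| ^ (x-1) = -((-b) * |(-b)| ^ (x-1)) := by rw [abs_neg]; ring
      rw [h1, h2, hw_key hx0 (by linarith), hw_key hx0 (by linarith), neg_lt_neg_iff]
      exact Real.rpow_lt_rpow (by linarith) (by linarith) hx0
    · have h1 : a * |a| ^ (x-1) < 0 :=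
        mul_neg_of_neg_of_pos ha (Real.rpow_pos_of_pos (abs_pos.mpr ha.ne) _)
      have h2 : 0 ≤ b * |b| ^ (x-1) :=
        mul_nonneg hb (Real.rpow_nonneg (abs_nonneg _) _)
      linarith

private lemma hw_surj {x : ℝ} (hx : 1 < x) :
    Function.Surjective (fun q : ℝ => q * |q| ^ (x - 1)) := by
  have hx0 : (0:ℝ) < x := lt_trans one_pos hx
  have key : ∀ c : ℝ, 0 ≤ c → ∃ q : ℝ, q * |q| ^ (x-1) = c := by
    intro c hc
    refine ⟨c ^ x⁻¹, ?_⟩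
    rw [hw_key hx0 (Real.rpow_nonneg hc _), ← Real.rpow_mul hc,
      inv_mul_cancel₀ hx0.ne', Real.rpow_one]
  intro c
  rcases le_or_gt 0 c with hc | hc
  · exact key c hc
  · obtain ⟨q, hq⟩ := key (-c) (by linarith)
    refine ⟨-q, ?_⟩
    simp only [abs_neg, neg_mul]
    rw [hq, neg_neg]

private lemma hw_existsUnique {r : ℝ} (hr : 0 < r) {x : ℝ} (hx : 1 < x) (c : ℝ) :
    ∃! q : ℝ, r * q * |q| ^ (x - 1) = c := by
  obtain ⟨q, hq⟩ := hw_surj hx (c / r)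
  simp only at hq
  refine ⟨q, ?_, fun y hy => ?_⟩
  · show r * q * |q| ^ (x - 1) = c
    rw [mul_assoc, hq, mul_div_cancel₀ c hr.ne']
  · apply (hw_mono hx).injective
    simp only
    rw [hq, eq_div_iff hr.ne']
    have hy' : r * y * |y| ^ (x - 1) = c := hy
    linear_combination hy'

/-- Reservoir heads and the flows along a set `E_I` of `|V_c|` edges whose
columns in `B_{V_c,·}` are linearly independent determine the whole hydraulic state
uniquely; moreover the unique consumer heads satisfy
`B_{V_c,E_I}ᵀ h_{V_c} = D_{E_I,E_I} q_{E_I} − B_{V_r,E_I}ᵀ h_{V_r}`. -/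
theorem reservoir_heads_and_some_flows_determine_state
    {V E : Type*} [Fintype V] [Fintype E] [DecidableEq V] [DecidableEq E]
    (src tgt : E → V)
    (hconn : (SimpleGraph.fromRel fun v u =>
      ∃ e, (src e = v ∧ tgt e = u) ∨ (src e = u ∧ tgt e = v)).Connected)
    (Res : Finset V) (hRes : Res.Nonempty) (hCon : Resᶜ.Nonempty)
    (B : Matrix V E ℝ)
    (hB : ∀ v e, B v e = (if src e = v then 1 else 0) - (if tgt e = v then 1 else 0))
    (r : E → ℝ) (hr : ∀ e, 0 < r e) (x : ℝ) (hx : 1 < x)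
    (EI : Finset E) (hcard : EI.card = Fintype.card {v // v ∈ Resᶜ})
    (hindep : LinearIndependent ℝ
      (fun j : {e // e ∈ EI} => fun v : {v // v ∈ Resᶜ} => B (v : V) (j : E)))
    (hVr : {v // v ∈ Res} → ℝ) (qI : {e // e ∈ EI} → ℝ) :
    (∃! t : ({v // v ∈ Resᶜ} → ℝ) × ({e // e ∉ EI} → ℝ) × ({v // v ∈ Resᶜ} → ℝ),
      (Bᵀ.mulVec
          (fun v => if hv : v ∈ Res then hVr ⟨v, hv⟩ else t.1 ⟨v, Finset.mem_compl.mpr hv⟩) =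
        fun e => r e * (if he : e ∈ EI then qI ⟨e, he⟩ else t.2.1 ⟨e, he⟩) *
          |if he : e ∈ EI then qI ⟨e, he⟩ else t.2.1 ⟨e, he⟩| ^ (x - 1)) ∧
      (∀ v : {v // v ∈ Resᶜ},
        B.mulVec (fun e => if he : e ∈ EI then qI ⟨e, he⟩ else t.2.1 ⟨e, he⟩) (v : V) =
          -2 * t.2.2 v)) ∧
    (∀ t : ({v // v ∈ Resᶜ} → ℝ) × ({e // e ∉ EI} → ℝ) × ({v // v ∈ Resᶜ} → ℝ),
      ((Bᵀ.mulVec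
          (fun v => if hv : v ∈ Res then hVr ⟨v, hv⟩ else t.1 ⟨v, Finset.mem_compl.mpr hv⟩) =
        fun e => r e * (if he : e ∈ EI then qI ⟨e, he⟩ else t.2.1 ⟨e, he⟩) *
          |if he : e ∈ EI then qI ⟨e, he⟩ else t.2.1 ⟨e, he⟩| ^ (x - 1)) ∧
      (∀ v : {v // v ∈ Resᶜ},
        B.mulVec (fun e => if he : e ∈ EI then qI ⟨e, he⟩ else t.2.1 ⟨e, he⟩) (v : V) =
          -2 * t.2.2 v)) →
      (B.submatrix (fun v : {v // v ∈ Resᶜ} => (v : V)) (fun j : {e // e ∈ EI} => (j : E)))ᵀ.mulVec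
          t.1 =
        (fun j : {e // e ∈ EI} => r (j : E) * qI j * |qI j| ^ (x - 1)) -
        (B.submatrix (fun v : {v // v ∈ Res} => (v : V))
          (fun j : {e // e ∈ EI} => (j : E)))ᵀ.mulVec hVr) := by
  classical
  -- split a combined-head product sum over reservoirs and consumers
  have hsplit : ∀ (hc : {v // v ∈ Resᶜ} → ℝ) (e : E),
      (Bᵀ.mulVec (fun v => if hv : v ∈ Res then hVr ⟨v, hv⟩
          else hc ⟨v, Finset.mem_compl.mpr hv⟩)) e
        = (∑ w : {v // v ∈ Res}, B (w : V) e * hVr w)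
          + ∑ v : {v // v ∈ Resᶜ}, B (v : V) e * hc v := by
    intro hc e
    simp only [Matrix.mulVec, dotProduct, Matrix.transpose_apply]
    rw [← Finset.sum_add_sum_compl Res]
    congr 1
    · rw [Finset.sum_subtype Res (fun v => Iff.rfl)
        (fun v => B v e * (if hv : v ∈ Res then hVr ⟨v, hv⟩
          else hc ⟨v, Finset.mem_compl.mpr hv⟩))]
      refine Finset.sum_congr rfl fun w _ => ?_
      rw [dif_pos w.2]
    · rw [Finset.sum_subtype Resᶜ (fun v => Iff.rfl)
        (fun v => B v e * (if hv : v ∈ Res then hVr ⟨v, hv⟩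
          else hc ⟨v, Finset.mem_compl.mpr hv⟩))]
      refine Finset.sum_congr rfl fun v _ => ?_
      rw [dif_neg (Finset.mem_compl.mp v.2)]
  -- the square matrix of independent columns
  have hcard' : Fintype.card {e // e ∈ EI} = Fintype.card {v // v ∈ Resᶜ} := by
    rw [Fintype.card_coe]; exact hcard
  let κ : {e // e ∈ EI} ≃ {v // v ∈ Resᶜ} := Fintype.equivOfCardEq hcard'
  set N : Matrix {v // v ∈ Resᶜ} {v // v ∈ Resᶜ} ℝ :=
    fun v w => B (v : V) ((κ.symm w : {e // e ∈ EI}) : E) with hN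
  have hNunit : IsUnit N := by
    rw [← Matrix.linearIndependent_cols_iff_isUnit]
    exact hindep.comp κ.symm κ.symm.injective
  have hInj : Function.Injective N.vecMul := Matrix.vecMul_injective_iff_isUnit.mpr hNunit
  have hSurj : Function.Surjective N.vecMul := Matrix.vecMul_surjective_iff_isUnit.mpr hNunit
  have hvm : ∀ (h : {v // v ∈ Resᶜ} → ℝ) (w : {v // v ∈ Resᶜ}),
      N.vecMul h w = ∑ v : {v // v ∈ Resᶜ}, B (v : V) ((κ.symm w : {e // e ∈ EI}) : E) * h v := by
    intro h w
    simp only [Matrix.vecMul, dotProduct, hN]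
    exact Finset.sum_congr rfl fun v _ => mul_comm _ _
  set b : {e // e ∈ EI} → ℝ := fun j =>
    r (j : E) * qI j * |qI j| ^ (x - 1)
      - ∑ w : {v // v ∈ Res}, B (w : V) (j : E) * hVr w with hb
  -- unique consumer heads
  have hLbij : ∃! hc : {v // v ∈ Resᶜ} → ℝ, ∀ j : {e // e ∈ EI},
      (∑ v : {v // v ∈ Resᶜ}, B (v : V) (j : E) * hc v) = b j := by
    obtain ⟨hc, hhc⟩ := hSurj (fun w => b (κ.symm w))
    refine ⟨hc, fun j => ?_, fun y hy => hInj ?_⟩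
    · have h1 := (hvm hc (κ j)).symm.trans (congrFun hhc (κ j))
      rwa [Equiv.symm_apply_apply] at h1
    · funext w
      show N.vecMul y w = N.vecMul hc w
      rw [hvm, hvm]
      have h1 := (hvm hc (κ (κ.symm w))).symm.trans (congrFun hhc (κ (κ.symm w)))
      rw [Equiv.symm_apply_apply] at h1
      rw [hy (κ.symm w), h1]
  obtain ⟨hc, hhc, hhcuniq⟩ := hLbij
  set H : V → ℝ := fun v => if hv : v ∈ Res then hVr ⟨v, hv⟩
    else hc ⟨v, Finset.mem_compl.mpr hv⟩ with hH
  -- unique dependent flows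
  have hq := fun (e : {e // e ∉ EI}) =>
    hw_existsUnique (hr (e : E)) hx ((Bᵀ.mulVec H) (e : E))
  set qD : {e // e ∉ EI} → ℝ := fun e => (hq e).choose with hqDdef
  have hqDspec : ∀ e : {e // e ∉ EI},
      r (e : E) * qD e * |qD e| ^ (x - 1) = (Bᵀ.mulVec H) (e : E) :=
    fun e => (hq e).choose_spec.1
  have hqDuniq : ∀ (e : {e // e ∉ EI}) (y : ℝ),
      r (e : E) * y * |y| ^ (x - 1) = (Bᵀ.mulVec H) (e : E) → y = qD e :=
    fun e y hy => (hq e).choose_spec.2 y hy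
  set Q : E → ℝ := fun e => if he : e ∈ EI then qI ⟨e, he⟩ else qD ⟨e, he⟩ with hQ
  set d : {v // v ∈ Resᶜ} → ℝ := fun v => -(B.mulVec Q (v : V)) / 2 with hd
  constructor
  · refine ⟨(hc, qD, d), ⟨?_, ?_⟩, ?_⟩
    · -- head-loss equations
      funext e
      show (Bᵀ.mulVec H) e = r e * Q e * |Q e| ^ (x - 1)
      by_cases he : e ∈ EI
      · have h1 : (∑ v : {v // v ∈ Resᶜ}, B (v : V) e * hc v)
            = r e * qI ⟨e, he⟩ * |qI ⟨e, he⟩| ^ (x - 1)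
              - ∑ w : {v // v ∈ Res}, B (w : V) e * hVr w := hhc ⟨e, he⟩
        rw [show Q e = qI ⟨e, he⟩ from dif_pos he, hsplit hc e, h1]
        ring
      · rw [show Q e = qD ⟨e, he⟩ from dif_neg he]
        exact (hqDspec ⟨e, he⟩).symm
    · -- demand equations
      intro v
      show B.mulVec Q (v : V) = -2 * d v
      rw [hd]
      ring
    · -- uniqueness
      rintro ⟨a, qd, dd⟩ ⟨ht1, ht2⟩
      have ha : a = hc := by
        apply hhcuniq
        intro j
        have h2 := congrFun ht1 (j : E)
        rw [hsplit a (j : E), dif_pos j.2] at h2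
        simp only [hb, Subtype.coe_eta] at h2 ⊢
        linarith [h2]
      have hqd : qd = qD := by
        funext e
        apply hqDuniq e
        have h2 := congrFun ht1 (e : E)
        rw [dif_neg e.2, ha] at h2
        exact h2.symm
      have hdd : dd = d := by
        funext v
        have h2 := ht2 v
        rw [hqd] at h2
        rw [hd]
        simp only
        linarith [h2]
      simp only [Prod.mk.injEq]
      exact ⟨ha, hqd, hdd⟩
  · -- the characterization of consumer heads
    rintro t ⟨ht1, ht2⟩
    funext j
    have h2 := congrFun ht1 (j : E)
    rw [hsplit t.1 (j : E), dif_pos j.2] at h2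
    simp only [Pi.sub_apply, Matrix.mulVec, dotProduct, Matrix.transpose_apply,
      Matrix.submatrix_apply, Subtype.coe_eta] at h2 ⊢
    linarith [h2]
end

section
/- Let f: R^e → R^e have components f_i(q) = r_i q_i |q_i|^{x−1} with r_i > 0 and x > 1. For any q_d ∈ R^e, any q₀ ∈ R^e with max_i |q₀ᵢ| sufficiently large (so that (1/4)|q₀ⱼ| > |q_dⱼ| for j = argmax_i |q₀ᵢ|), one has ⟨f(q_d + q₀) − f(q_d), q₀⟩ ≥ x · r_j · |q₀ⱼ|^{x+1} · ∫_{1/2}^1 (t − 1/4)^{x−1} dt, where j = argmax_i |q₀ᵢ|. -/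
/-!
Write `φ(s) = s |s|^(x-1)` (`signedRpow x`), so that `f q i = r i * φ (q i)` and the pairing is
`∑ i, r i (φ (qd i + q₀ i) - φ (qd i)) q₀ i`. Since `φ` is monotone every summand is nonnegative,
so the sum dominates its `j`-th term. When `|qd j| ≤ |q₀ j| / 4` and, say, `q₀ j > 0`, monotonicity
gives `φ (qd j + q₀ j) ≥ φ (3/4 q₀ j)` and `φ (qd j) ≤ φ (1/4 q₀ j)`, hence the `j`-th term is at
least `r j ((3/4)^x - (1/4)^x) |q₀ j|^(x+1)`; and `((3/4)^x - (1/4)^x) / x` is exactly the integral.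
-/

open Matrix

noncomputable def signedRpow (x s : ℝ) : ℝ := s * |s| ^ (x - 1)

lemma signedRpow_of_nonneg {x s : ℝ} (hx : x ≠ 0) (hs : 0 ≤ s) : signedRpow x s = s ^ x := by
  rw [signedRpow, abs_of_nonneg hs]
  rcases hs.eq_or_lt with rfl | hs
  · simp [Real.zero_rpow hx]
  · rw [Real.rpow_sub_one hs.ne', mul_div_cancel₀ _ hs.ne']

lemma signedRpow_neg (x s : ℝ) : signedRpow x (-s) = -signedRpow x s := by
  simp only [signedRpow, abs_neg, neg_mul]

lemma signedRpow_monotone {x : ℝ} (hx : 0 < x) : Monotone (signedRpow x) := by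
  have mono_nonneg : MonotoneOn (signedRpow x) (Set.Ici 0) := fun s hs t _ hst => by
    rw [signedRpow_of_nonneg hx.ne' hs, signedRpow_of_nonneg hx.ne' (le_trans hs hst)]
    exact Real.rpow_le_rpow hs hst hx.le
  have mono_nonpos : MonotoneOn (signedRpow x) (Set.Iic 0) := fun s hs t ht hst => by
    have := mono_nonneg (Set.mem_Ici.2 (neg_nonneg.2 ht)) (Set.mem_Ici.2 (neg_nonneg.2 hs))
      (neg_le_neg hst)
    rwa [signedRpow_neg, signedRpow_neg, neg_le_neg_iff] at this
  exact mono_nonpos.Iic_union_Ici mono_nonneg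

lemma Monotone.sub_mul_nonneg {g : ℝ → ℝ} (hg : Monotone g) (a b : ℝ) :
    0 ≤ (g (a + b) - g a) * b := by
  rcases le_total 0 b with hb | hb
  · exact mul_nonneg (sub_nonneg.2 (hg (le_add_of_nonneg_right hb))) hb
  · exact mul_nonneg_of_nonpos_of_nonpos (sub_nonpos.2 (hg (add_le_of_nonpos_right hb))) hb

lemma signedRpow_add_sub_ge {x a b : ℝ} (hx : 0 < x) (hb : 0 ≤ b) (ha : |a| ≤ b / 4) :
    ((3 / 4) ^ x - (1 / 4) ^ x) * b ^ x ≤ signedRpow x (a + b) - signedRpow x a := by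
  have hφ (c : ℝ) (hc : 0 ≤ c) : signedRpow x (c * b) = c ^ x * b ^ x := by
    rw [signedRpow_of_nonneg hx.ne' (mul_nonneg hc hb), Real.mul_rpow hc hb]
  have upper := signedRpow_monotone hx (show a ≤ 1 / 4 * b by linarith [le_abs_self a])
  have lower := signedRpow_monotone hx (show 3 / 4 * b ≤ a + b by linarith [neg_abs_le a])
  rw [hφ _ (by norm_num)] at upper lower
  linarith

lemma signedRpow_add_sub_mul_ge {x a b : ℝ} (hx : 0 < x) (ha : |a| ≤ |b| / 4) :
    ((3 / 4) ^ x - (1 / 4) ^ x) * |b| ^ (x + 1) ≤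
      (signedRpow x (a + b) - signedRpow x a) * b := by
  rw [Real.rpow_add_one' (abs_nonneg b) (by linarith), ← mul_assoc]
  rcases le_total 0 b with hb | hb
  · rw [abs_of_nonneg hb] at ha ⊢
    exact mul_le_mul_of_nonneg_right (signedRpow_add_sub_ge hx hb ha) hb
  · rw [abs_of_nonpos hb] at ha ⊢
    rw [← abs_neg] at ha
    have := signedRpow_add_sub_ge hx (neg_nonneg.2 hb) ha
    rw [← neg_add, signedRpow_neg, signedRpow_neg] at this
    nlinarith

lemma integral_sub_rpow_sub_one {x : ℝ} (hx : 0 < x) (a b c : ℝ) :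
    ∫ t in a..b, (t - c) ^ (x - 1) = ((b - c) ^ x - (a - c) ^ x) / x := by
  rw [intervalIntegral.integral_comp_sub_right (fun t => t ^ (x - 1)),
    integral_rpow (Or.inl (by linarith)), sub_add_cancel]

theorem hazen_williams_coercivity_bound_general
    {E : Type*} [Fintype E] (r : E → ℝ) (hr : ∀ i, 0 < r i) (x : ℝ) (hx : 1 < x)
    (f : (E → ℝ) → (E → ℝ))
    (hf : ∀ q i, f q i = r i * q i * |q i| ^ (x - 1))
    (qd q₀ : E → ℝ) (j : E)
    (hlarge : |qd j| < (1/4) * |q₀ j|) :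
    (f (qd + q₀) - f qd) ⬝ᵥ q₀ ≥
      x * r j * |q₀ j| ^ (x + 1) * ∫ t in (1/2 : ℝ)..1, (t - 1/4) ^ (x - 1) := by
  have hx₀ : 0 < x := by linarith
  have hterm (i : E) : (f (qd + q₀) - f qd) i * q₀ i =
      r i * ((signedRpow x (qd i + q₀ i) - signedRpow x (qd i)) * q₀ i) := by
    simp only [Pi.sub_apply, Pi.add_apply, hf, signedRpow]
    ring
  have hintegral : ∫ t in (1/2 : ℝ)..1, (t - 1/4) ^ (x - 1) = ((3/4) ^ x - (1/4) ^ x) / x := by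
    rw [integral_sub_rpow_sub_one hx₀]
    norm_num
  calc x * r j * |q₀ j| ^ (x + 1) * ∫ t in (1/2 : ℝ)..1, (t - 1/4) ^ (x - 1)
      = r j * (((3/4) ^ x - (1/4) ^ x) * |q₀ j| ^ (x + 1)) := by
        rw [hintegral]
        field_simp
    _ ≤ (f (qd + q₀) - f qd) j * q₀ j := by
        rw [hterm]
        exact mul_le_mul_of_nonneg_left (signedRpow_add_sub_mul_ge hx₀ (by linarith))
          (hr j).le
    _ ≤ (f (qd + q₀) - f qd) ⬝ᵥ q₀ :=
        Finset.single_le_sum (fun i _ => hterm i ▸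
          mul_nonneg (hr i).le ((signedRpow_monotone hx₀).sub_mul_nonneg _ _)) (Finset.mem_univ j)

/-- Coercivity lower bound for the Hazen-Williams nonlinearity: if `j`
maximizes `|q₀ᵢ|` and `(1/4)|q₀ⱼ| > |q_dⱼ|`, then
`⟨f(q_d + q₀) − f(q_d), q₀⟩ ≥ x r_j |q₀ⱼ|^{x+1} ∫_{1/2}^1 (t − 1/4)^{x−1} dt`. -/
theorem hazen_williams_coercivity_bound
    {E : Type*} [Fintype E] (r : E → ℝ) (hr : ∀ i, 0 < r i) (x : ℝ) (hx : 1 < x)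
    (f : (E → ℝ) → (E → ℝ))
    (hf : ∀ q i, f q i = r i * q i * |q i| ^ (x - 1))
    (qd q₀ : E → ℝ) (j : E)
    (hmax : ∀ i, |q₀ i| ≤ |q₀ j|)
    (hlarge : |qd j| < (1/4) * |q₀ j|) :
    (f (qd + q₀) - f qd) ⬝ᵥ q₀ ≥
      x * r j * |q₀ j| ^ (x + 1) * ∫ t in (1/2 : ℝ)..1, (t - 1/4) ^ (x - 1) :=
  hazen_williams_coercivity_bound_general r hr x hx f hf qd q₀ j hlarge
end
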